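/- Let q > 1 and α > 0 be real, and set p = q^{α+1/2}, Q = q^{1/2}. Then there exist no nonzero complex number κ and invertible diagonal 4×4 complex matrix C such that, with σ := κ·Ř⁴, both left quantum partial trace identities T(C, σ) = I₄ and T(C, σ^{−1}) = I₄ hold. -/

import Mathlib

open Matrix

noncomputable section

/-- The elementary matrix `E(a,b;c,d)` on `ℂ⁴ ⊗ ℂ⁴`. -/
def E (a b c d : Fin 4) : Matrix (Fin 4 × Fin 4) (Fin 4 × Fin 4) ℂ :=
  Matrix.single (a, b) (c, d) 1

/-- `M ⊗ I₄`, acting on the first two factors of `ℂ⁴ ⊗ ℂ⁴ ⊗ ℂ⁴`. -/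
def op12 (M : Matrix (Fin 4 × Fin 4) (Fin 4 × Fin 4) ℂ) :
    Matrix (Fin 4 × Fin 4 × Fin 4) (Fin 4 × Fin 4 × Fin 4) ℂ :=
  Matrix.of fun x y => M (x.1, x.2.1) (y.1, y.2.1) * (if x.2.2 = y.2.2 then 1 else 0)

/-- `I₄ ⊗ M`, acting on the last two factors of `ℂ⁴ ⊗ ℂ⁴ ⊗ ℂ⁴`. -/
def op23 (M : Matrix (Fin 4 × Fin 4) (Fin 4 × Fin 4) ℂ) :
    Matrix (Fin 4 × Fin 4 × Fin 4) (Fin 4 × Fin 4 × Fin 4) ℂ :=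
  Matrix.of fun x y => (if x.1 = y.1 then 1 else 0) * M (x.2.1, x.2.2) (y.2.1, y.2.2)

/-- The left quantum partial trace `T(C, M)_{a,b} = Σ_{c,d} C_{d,c} M_{(c,a),(d,b)}`. -/
def ptrace (C : Matrix (Fin 4) (Fin 4) ℂ) (M : Matrix (Fin 4 × Fin 4) (Fin 4 × Fin 4) ℂ) :
    Matrix (Fin 4) (Fin 4) ℂ :=
  Matrix.of fun a b => ∑ c : Fin 4, ∑ d : Fin 4, C d c * M (c, a) (d, b)

/-- The quantum R matrix `Ř⁴` (Case 4), with complex parameters `p, Q`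
(indices shifted from 1–4 to 0–3). -/
def R4 (p Q : ℂ) : Matrix (Fin 4 × Fin 4) (Fin 4 × Fin 4) ℂ :=
  E 0 0 0 0
  - (p ^ 2 * Q⁻¹ ^ 2) • (E 1 1 1 1 + E 2 2 2 2)
  + (p ^ 4) • E 3 3 3 3
  + (p * Q⁻¹) • (E 0 1 1 0 + E 0 2 2 0 + E 1 0 0 1 + E 2 0 0 2)
  + (p ^ 3 * Q⁻¹) • (E 1 3 3 1 + E 2 3 3 2 + E 3 1 1 3 + E 3 2 2 3)
  + (p ^ 2 * Q⁻¹ ^ 2) • (E 0 3 3 0 + E 3 0 0 3)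
  - (p ^ 2) • (E 1 2 2 1 + E 2 1 1 2)

/-!
`Ř⁴` is the flip `v_c ⊗ v_d ↦ v_d ⊗ v_c` weighted by a symmetric table of monomials in `p` and
`Q⁻¹`, and inverting every entry of the table amounts to `(p, Q) ↦ (p⁻¹, Q⁻¹)`; hence
`(κ Ř⁴(p, Q))⁻¹ = κ⁻¹ Ř⁴(p⁻¹, Q⁻¹)`. A weighted flip contributes to the diagonal entry `(a, a)` of a
partial trace with diagonal `C = diag d` only through its weight at `(a, a)`. At `a = 1` and
`a = 4` the two trace identities read `κ d₁ = κ⁻¹ d₁ = 1` and `κ p⁴ d₄ = κ⁻¹ p⁻⁴ d₄ = 1`, so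
`κ² = 1 = κ² p⁸`, which is impossible for the real number `p = q^{α+1/2} > 1`.
-/

section SwapMonomial

variable {n R : Type*} [DecidableEq n] [CommRing R]

/-- `v_c ⊗ v_d ↦ f d c • v_d ⊗ v_c`. -/
def swapMonomial (f : Matrix n n R) : Matrix (n × n) (n × n) R :=
  of fun x y => if y = x.swap then f x.1 x.2 else 0

lemma smul_swapMonomial (κ : R) (f : Matrix n n R) :
    κ • swapMonomial f = swapMonomial (κ • f) := by
  ext x y
  simp only [swapMonomial, Matrix.smul_apply, of_apply, smul_eq_mul, mul_ite, mul_zero]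

lemma swapMonomial_mul_swapMonomial_eq_one [Fintype n] {f g : Matrix n n R}
    (h : ∀ a b, f a b * g b a = 1) : swapMonomial f * swapMonomial g = 1 := by
  ext x y
  rw [mul_apply, Finset.sum_eq_single x.swap]
  · by_cases hxy : y = x
    · subst hxy
      simp [swapMonomial, h]
    · simp [swapMonomial, hxy, one_apply_ne (Ne.symm hxy)]
  · intro z _ hz
    simp [swapMonomial, hz]
  · simp

end SwapMonomial

lemma ptrace_diagonal_swapMonomial_apply_self (d : Fin 4 → ℂ) (f : Matrix (Fin 4) (Fin 4) ℂ)
    (a : Fin 4) : ptrace (diagonal d) (swapMonomial f) a a = d a * f a a := by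
  simp +contextual [ptrace, swapMonomial, diagonal_apply, Prod.ext_iff, ite_and,
    Finset.sum_ite_eq']

def R4Coeff (p Q : ℂ) : Matrix (Fin 4) (Fin 4) ℂ :=
  !![1, p * Q⁻¹, p * Q⁻¹, p ^ 2 * Q⁻¹ ^ 2;
     p * Q⁻¹, -(p ^ 2 * Q⁻¹ ^ 2), -(p ^ 2), p ^ 3 * Q⁻¹;
     p * Q⁻¹, -(p ^ 2), -(p ^ 2 * Q⁻¹ ^ 2), p ^ 3 * Q⁻¹;
     p ^ 2 * Q⁻¹ ^ 2, p ^ 3 * Q⁻¹, p ^ 3 * Q⁻¹, p ^ 4]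

lemma R4_eq_swapMonomial (p Q : ℂ) : R4 p Q = swapMonomial (R4Coeff p Q) := by
  ext ⟨a, b⟩ ⟨c, d⟩
  simp only [R4, E, Matrix.sub_apply, Matrix.add_apply, Matrix.smul_apply, smul_eq_mul,
    single_apply, swapMonomial, of_apply, Prod.mk.injEq, Prod.swap_prod_mk]
  fin_cases a <;> fin_cases b <;> fin_cases c <;> fin_cases d <;> simp [R4Coeff]

lemma R4Coeff_mul_R4Coeff_inv {p Q : ℂ} (hp : p ≠ 0) (hQ : Q ≠ 0) (a b : Fin 4) :
    R4Coeff p Q a b * R4Coeff p⁻¹ Q⁻¹ b a = 1 := by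
  fin_cases a <;> fin_cases b <;> simp [R4Coeff] <;> field_simp

lemma R4_mul_R4_inv {p Q : ℂ} (hp : p ≠ 0) (hQ : Q ≠ 0) : R4 p Q * R4 p⁻¹ Q⁻¹ = 1 := by
  rw [R4_eq_swapMonomial, R4_eq_swapMonomial]
  exact swapMonomial_mul_swapMonomial_eq_one (R4Coeff_mul_R4Coeff_inv hp hQ)

lemma inv_smul_R4 {κ p Q : ℂ} (hκ : κ ≠ 0) (hp : p ≠ 0) (hQ : Q ≠ 0) :
    (κ • R4 p Q)⁻¹ = κ⁻¹ • R4 p⁻¹ Q⁻¹ := by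
  refine inv_eq_right_inv ?_
  rw [smul_mul_smul, mul_inv_cancel₀ hκ, one_smul, R4_mul_R4_inv hp hQ]

lemma ptrace_diagonal_smul_R4_apply_self (d : Fin 4 → ℂ) (κ p Q : ℂ) (a : Fin 4) :
    ptrace (diagonal d) (κ • R4 p Q) a a = d a * (κ * R4Coeff p Q a a) := by
  rw [R4_eq_swapMonomial, smul_swapMonomial, ptrace_diagonal_swapMonomial_apply_self]
  rfl

lemma pow_eight_eq_one_of_ptrace_smul_R4_eq_one {d : Fin 4 → ℂ} {κ p Q : ℂ}
    (h : ptrace (diagonal d) (κ • R4 p Q) = 1)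
    (h' : ptrace (diagonal d) (κ⁻¹ • R4 p⁻¹ Q⁻¹) = 1) : p ^ 8 = 1 := by
  have entry (a : Fin 4) := congrFun (congrFun h a) a
  have entry' (a : Fin 4) := congrFun (congrFun h' a) a
  simp only [ptrace_diagonal_smul_R4_apply_self, one_apply_eq] at entry entry'
  have e0 : d 0 * κ = 1 := by simpa [R4Coeff] using entry 0
  have e3 : d 3 * (κ * p ^ 4) = 1 := by simpa [R4Coeff] using entry 3
  have e0' : d 0 * κ⁻¹ = 1 := by simpa [R4Coeff] using entry' 0
  have e3' : d 3 * (κ⁻¹ * (p ^ 4)⁻¹) = 1 := by simpa [R4Coeff] using entry' 3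
  have hκ : κ ≠ 0 := right_ne_zero_of_mul_eq_one e0
  have hp : p ≠ 0 := by rintro rfl; simp at e3
  have hd0 : d 0 = κ := (mul_inv_eq_one₀ hκ).mp e0'
  have hd3 : d 3 = κ * p ^ 4 := by
    rwa [← mul_inv, mul_inv_eq_one₀ (mul_ne_zero hκ (pow_ne_zero 4 hp))] at e3'
  linear_combination e3 - p ^ 8 * e0 + p ^ 8 * κ * hd0 - κ * p ^ 4 * hd3

/-- For Case 4 there are no nonzero `κ` and invertible diagonal `C` making both left
quantum partial trace identities hold for `σ = κ·Ř⁴`. -/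
theorem case4_no_ambient_invariant (q α : ℝ) (hq : 1 < q) (hα : 0 < α)
    (p Q : ℂ) (hp : p = ((q ^ (α + 1 / 2) : ℝ) : ℂ)) (hQ : Q = ((q ^ ((1 : ℝ) / 2) : ℝ) : ℂ)) :
    ¬ ∃ (κ : ℂ) (d : Fin 4 → ℂ), κ ≠ 0 ∧ (∀ i, d i ≠ 0) ∧
        ptrace (Matrix.diagonal d) (κ • R4 p Q) = 1 ∧
        ptrace (Matrix.diagonal d) (κ • R4 p Q)⁻¹ = 1 := by
  rintro ⟨κ, d, hκ, -, h, h'⟩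
  have hp1 : 1 < q ^ (α + 1 / 2) := Real.one_lt_rpow hq (by linarith)
  have hp0 : p ≠ 0 := by
    rw [hp]
    exact_mod_cast (zero_lt_one.trans hp1).ne'
  have hQ0 : Q ≠ 0 := by
    rw [hQ]
    exact_mod_cast (Real.rpow_pos_of_pos (zero_lt_one.trans hq) _).ne'
  rw [inv_smul_R4 hκ hp0 hQ0] at h'
  have hp8 := pow_eight_eq_one_of_ptrace_smul_R4_eq_one h h'
  rw [hp] at hp8
  exact (one_lt_pow₀ hp1 (by norm_num : 8 ≠ 0)).ne' (by exact_mod_cast hp8)
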